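/- Minorization condition for the Bayesian fused lasso Gibbs sampler. Let n ≥ 1, p ≥ 2, y ∈ ℝⁿ, X a real n×p matrix, λ₁, λ₂ > 0, α, ξ ≥ 0 and d > 0. Set d₁ = 2d/λ₁ and d₂ = 2d/λ₂, R = d + 2ξ + p²λ₂²d₂² + p²λ₁²d₁², and ε = e^{−1} · ((yᵀy − yᵀX(XᵀX + (λ₁²/(8d))I_p)⁻¹Xᵀy + 2ξ)/R)^{(n+p)/2+α}. Then for every starting point (β₀, τ₀², w₀², σ₀²) with V_BFL(β₀, τ₀², w₀², σ₀²) ≤ d, and for every (β, τ², w², σ²) ∈ ℝᵖ × (0,∞)ᵖ × (0,∞)^{p−1} × (0,∞), the Gibbs transition density satisfies k(β, τ², w², σ²) ≥ ε · φ_p(β; A_{τ,w}⁻¹Xᵀy, σ²A_{τ,w}⁻¹) · h_{(n+p)/2+α, R/2}(σ²) · ∏_{i=1}^p g_{λ₁, d₁, σ}(τ²ᵢ) · ∏_{i=1}^{p−1} g_{λ₂, d₂, σ}(w²ᵢ), where σ = √(σ²), A_{τ,w} = XᵀX + Σ⁻¹_{τ,w}, and k(β, τ², w², σ²) = φ_p(β;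 A_{τ,w}⁻¹Xᵀy, σ²A_{τ,w}⁻¹) · ∏_{i=1}^p g_{λ₁, β₀ᵢ, σ}(τ²ᵢ) · ∏_{i=1}^{p−1} g_{λ₂, β₀,ᵢ₊₁ − β₀ᵢ, σ}(w²ᵢ) · h_{(n+p)/2+α, B₀/2}(σ²) with B₀ = (y − Xβ₀)ᵀ(y − Xβ₀) + β₀ᵀΣ⁻¹_{τ₀,w₀}β₀ + 2ξ. -/
import Mathlib


open Matrix MeasureTheory Real

/-- The fused lasso precision matrix `Σ⁻¹_{τ,w}`: the symmetric tridiagonal `p×p` matrix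
with diagonal entries `1/τ₁ + 1/w₁` at `(0,0)`, `1/τᵢ + 1/w_{i−1} + 1/wᵢ` at interior
`(i,i)`, `1/τ_p + 1/w_{p−1}` at `(p−1,p−1)`, and entries `−1/wᵢ` at `(i,i+1)` and
`(i+1,i)`.  (Here `τ i` plays the role of `τ²_{i+1}` and `w i` of `w²_{i+1}`.) -/
noncomputable def fusedPrec (p : ℕ) (τ : Fin p → ℝ) (w : Fin (p - 1) → ℝ) :
    Matrix (Fin p) (Fin p) ℝ := fun i j =>
  if i = j then
    (τ i)⁻¹
      + (if h : (i : ℕ) < p - 1 then (w ⟨i, h⟩)⁻¹ else 0)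
      + (if h : 0 < (i : ℕ) ∧ (i : ℕ) - 1 < p - 1 then (w ⟨(i : ℕ) - 1, h.2⟩)⁻¹ else 0)
  else if h : (j : ℕ) = (i : ℕ) + 1 ∧ (i : ℕ) < p - 1 then -(w ⟨i, h.2⟩)⁻¹
  else if h : (i : ℕ) = (j : ℕ) + 1 ∧ (j : ℕ) < p - 1 then -(w ⟨j, h.2⟩)⁻¹
  else 0

/-- `N_p(μ, σ²A⁻¹)` density expressed through the precision-type matrix `A`:
`φ_p(β; μ, σ²A⁻¹) = (2πσ²)^{−p/2}(det A)^{1/2} exp(−(β−μ)ᵀA(β−μ)/(2σ²))`. -/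
noncomputable def gaussDens (p : ℕ) (A : Matrix (Fin p) (Fin p) ℝ) (μ : Fin p → ℝ)
    (s : ℝ) (β : Fin p → ℝ) : ℝ :=
  (2 * Real.pi * s) ^ (-(p : ℝ) / 2) * Real.sqrt A.det *
    Real.exp (-((β - μ) ⬝ᵥ (A *ᵥ (β - μ))) / (2 * s))

/-- Density of the reciprocal of an Inverse-Gaussian(λσ/|a|, λ²) variable:
`g_{λ,a,σ}(x) = (λ/√(2π)) exp(λ|a|/σ) x^{−1/2} exp(−λ²x/2 − a²/(2σ²x))`. -/
noncomputable def gDens (lam a σ x : ℝ) : ℝ :=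
  lam / Real.sqrt (2 * Real.pi) * Real.exp (lam * |a| / σ) * x ^ (-(1 : ℝ) / 2) *
    Real.exp (-(lam ^ 2 * x) / 2 - a ^ 2 / (2 * σ ^ 2 * x))

/-- Inverse-Gamma(a,b) density: `h_{a,b}(x) = (bᵃ/Γ(a)) x^{−a−1} e^{−b/x}`. -/
noncomputable def igamDens (a b x : ℝ) : ℝ :=
  b ^ a / Real.Gamma a * x ^ (-a - 1) * Real.exp (-b / x)

/-- Drift function for the Bayesian fused lasso:
`V_BFL(β,τ²,w²) = (y−Xβ)ᵀ(y−Xβ) + βᵀΣ⁻¹_{τ,w}β + (λ₁²/4)∑τ²ᵢ + (λ₂²/4)∑w²ᵢ`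
(it does not depend on σ²). -/
noncomputable def VBFL (n p : ℕ) (y : Fin n → ℝ) (X : Matrix (Fin n) (Fin p) ℝ)
    (l1 l2 : ℝ) (β τ : Fin p → ℝ) (w : Fin (p - 1) → ℝ) : ℝ :=
  (y - X *ᵥ β) ⬝ᵥ (y - X *ᵥ β) + β ⬝ᵥ ((fusedPrec p τ w) *ᵥ β)
    + l1 ^ 2 / 4 * ∑ i, τ i + l2 ^ 2 / 4 * ∑ i, w i

/-- Gibbs transition density for the Bayesian fused lasso started at
`(β₀, τ₀², w₀², σ₀²)`, evaluated at the new state `x = (β, τ², w², σ²)`: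
`k = φ_p(β; A_{τ,w}⁻¹Xᵀy, σ²A_{τ,w}⁻¹) ∏ᵢ g_{λ₁,β₀ᵢ,σ}(τ²ᵢ)
∏ᵢ g_{λ₂,β₀,ᵢ₊₁−β₀ᵢ,σ}(w²ᵢ) · h_{(n+p)/2+α, B₀/2}(σ²)` with `σ = √σ²` and
`B₀ = (y−Xβ₀)ᵀ(y−Xβ₀) + β₀ᵀΣ⁻¹_{τ₀,w₀}β₀ + 2ξ`. -/
noncomputable def kBFL (n p : ℕ) (y : Fin n → ℝ) (X : Matrix (Fin n) (Fin p) ℝ)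
    (l1 l2 α ξ : ℝ) (β₀ τ₀ : Fin p → ℝ) (w₀ : Fin (p - 1) → ℝ)
    (x : (Fin p → ℝ) × (Fin p → ℝ) × (Fin (p - 1) → ℝ) × ℝ) : ℝ :=
  gaussDens p (Xᵀ * X + fusedPrec p x.2.1 x.2.2.1)
      ((Xᵀ * X + fusedPrec p x.2.1 x.2.2.1)⁻¹ *ᵥ (Xᵀ *ᵥ y)) x.2.2.2 x.1
    * (∏ i, gDens l1 (β₀ i) (Real.sqrt x.2.2.2) (x.2.1 i))
    * (∏ i : Fin (p - 1),
        gDens l2 (β₀ ⟨(i : ℕ) + 1, by have := i.isLt; omega⟩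
            - β₀ ⟨(i : ℕ), by have := i.isLt; omega⟩)
          (Real.sqrt x.2.2.2) (x.2.2.1 i))
    * igamDens (((n : ℝ) + p) / 2 + α)
        (((y - X *ᵥ β₀) ⬝ᵥ (y - X *ᵥ β₀) + β₀ ⬝ᵥ ((fusedPrec p τ₀ w₀) *ᵥ β₀) + 2 * ξ) / 2)
        x.2.2.2

section Aux

open Finset

lemma dot_self_nonneg' {p : ℕ} (v : Fin p → ℝ) : 0 ≤ v ⬝ᵥ v :=
  Finset.sum_nonneg fun i _ => mul_self_nonneg (v i)

lemma fusedPrec_row (p : ℕ) (τ : Fin p → ℝ) (w : Fin (p - 1) → ℝ) (β : Fin p → ℝ)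
    (i : Fin p) :
    (fusedPrec p τ w *ᵥ β) i =
      (τ i)⁻¹ * β i
      + (if h : (i : ℕ) < p - 1 then
          (w ⟨i, h⟩)⁻¹ * (β i - β ⟨(i : ℕ) + 1, by have := i.isLt; omega⟩) else 0)
      + (if h : 0 < (i : ℕ) ∧ (i : ℕ) - 1 < p - 1 then
          (w ⟨(i : ℕ) - 1, h.2⟩)⁻¹ * (β i - β ⟨(i : ℕ) - 1, by have := i.isLt; omega⟩) else 0) := by
  have key : ∀ j : Fin p, fusedPrec p τ w i j * β j =
      (if j = i then ((τ i)⁻¹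
        + (if h : (i : ℕ) < p - 1 then (w ⟨i, h⟩)⁻¹ else 0)
        + (if h : 0 < (i : ℕ) ∧ (i : ℕ) - 1 < p - 1 then (w ⟨(i : ℕ) - 1, h.2⟩)⁻¹ else 0)) * β i
       else 0)
      + (if h : (i : ℕ) < p - 1 then
          (if j = (⟨(i : ℕ) + 1, by have := i.isLt; omega⟩ : Fin p) then -(w ⟨i, h⟩)⁻¹ * β j else 0)
         else 0)
      + (if h : 0 < (i : ℕ) ∧ (i : ℕ) - 1 < p - 1 then
          (if j = (⟨(i : ℕ) - 1, by have := i.isLt; omega⟩ : Fin p) then -(w ⟨(i : ℕ) - 1, h.2⟩)⁻¹ * β j else 0)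
         else 0) := by
    intro j
    unfold fusedPrec
    rcases eq_or_ne j i with rfl | hji
    · simp only [eq_self_iff_true, if_true]
      have h2 : ¬ ((j : ℕ) = (j : ℕ) + 1 ∧ (j : ℕ) < p - 1) := by omega
      have h3 : ∀ (h : (j : ℕ) < p - 1), ¬ (j = (⟨(j : ℕ) + 1, by have := j.isLt; omega⟩ : Fin p)) := by
        intro h hc
        have := congrArg (Fin.val) hc
        simp at this
      have h4 : ∀ (h : 0 < (j : ℕ) ∧ (j : ℕ) - 1 < p - 1), ¬ (j = (⟨(j : ℕ) - 1, by have := j.isLt; omega⟩ : Fin p)) := by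
        intro h hc
        have := congrArg (Fin.val) hc
        simp at this
        omega
      have e1 : (if h : (j : ℕ) < p - 1 then
          (if j = (⟨(j : ℕ) + 1, by have := j.isLt; omega⟩ : Fin p) then -(w ⟨j, h⟩)⁻¹ * β j else 0)
         else 0) = 0 := by
        split_ifs with hh1 hh2
        · exact absurd hh2 (h3 hh1)
        · rfl
        · rfl
      have e2 : (if h : 0 < (j : ℕ) ∧ (j : ℕ) - 1 < p - 1 then
          (if j = (⟨(j : ℕ) - 1, by have := j.isLt; omega⟩ : Fin p) then -(w ⟨(j : ℕ) - 1, h.2⟩)⁻¹ * β j else 0)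
         else 0) = 0 := by
        split_ifs with hh1 hh2
        · exact absurd hh2 (h4 hh1)
        · rfl
        · rfl
      rw [e1, e2]; ring
    · have hij : ¬ (i = j) := fun h => hji h.symm
      rw [if_neg hij, if_neg hji]
      by_cases hA : (j : ℕ) = (i : ℕ) + 1 ∧ (i : ℕ) < p - 1
      · rw [dif_pos hA]
        have hBneg : ¬ ((i : ℕ) = (j : ℕ) + 1 ∧ (j : ℕ) < p - 1) := by omega
        rw [dif_pos hA.2]
        have : j = (⟨(i : ℕ) + 1, by have := i.isLt; omega⟩ : Fin p) := by
          apply Fin.ext; exact hA.1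
        rw [if_pos this]
        by_cases hC : 0 < (i : ℕ) ∧ (i : ℕ) - 1 < p - 1
        · rw [dif_pos hC]
          have : ¬ (j = (⟨(i : ℕ) - 1, by have := i.isLt; omega⟩ : Fin p)) := by
            intro hc; have := congrArg Fin.val hc; simp at this; omega
          rw [if_neg this]; ring
        · rw [dif_neg hC]; ring
      · rw [dif_neg hA]
        by_cases hB : (i : ℕ) = (j : ℕ) + 1 ∧ (j : ℕ) < p - 1
        · rw [dif_pos hB]
          have hC : 0 < (i : ℕ) ∧ (i : ℕ) - 1 < p - 1 := by omega
          rw [dif_pos hC]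
          have hj : j = (⟨(i : ℕ) - 1, by have := i.isLt; omega⟩ : Fin p) := by
            apply Fin.ext; simp; omega
          rw [if_pos hj]
          have hwj : (⟨(i : ℕ) - 1, hC.2⟩ : Fin (p-1)) = ⟨(j:ℕ), hB.2⟩ := by
            apply Fin.ext; simp; omega
          rw [hwj]
          by_cases hA2 : (i : ℕ) < p - 1
          · rw [dif_pos hA2]
            have : ¬ (j = (⟨(i : ℕ) + 1, by have := i.isLt; omega⟩ : Fin p)) := by
              intro hc; have := congrArg Fin.val hc; simp at this; omega
            rw [if_neg this]; ring
          · rw [dif_neg hA2]; ring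
        · rw [dif_neg hB]
          have e1 : (if h : (i : ℕ) < p - 1 then
              (if j = (⟨(i : ℕ) + 1, by have := i.isLt; omega⟩ : Fin p) then -(w ⟨i, h⟩)⁻¹ * β j else 0)
             else 0) = 0 := by
            split_ifs with h1 h2
            · exfalso; have := congrArg Fin.val h2; simp at this; omega
            · rfl
            · rfl
          have e2 : (if h : 0 < (i : ℕ) ∧ (i : ℕ) - 1 < p - 1 then
              (if j = (⟨(i : ℕ) - 1, by have := i.isLt; omega⟩ : Fin p) then -(w ⟨(i : ℕ) - 1, h.2⟩)⁻¹ * β j else 0)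
             else 0) = 0 := by
            split_ifs with h1 h2
            · exfalso; have := congrArg Fin.val h2; simp at this; omega
            · rfl
            · rfl
          rw [e1, e2]; ring
  show (∑ j, fusedPrec p τ w i j * β j) = _
  rw [Finset.sum_congr rfl (fun j _ => key j)]
  rw [Finset.sum_add_distrib, Finset.sum_add_distrib, Finset.sum_ite_eq' Finset.univ i]
  simp only [Finset.mem_univ, if_true]
  have s2 : (∑ j : Fin p, (if h : (i : ℕ) < p - 1 then
        (if j = (⟨(i : ℕ) + 1, by have := i.isLt; omega⟩ : Fin p) then -(w ⟨i, h⟩)⁻¹ * β j else 0)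
       else 0))
      = (if h : (i : ℕ) < p - 1 then
          -(w ⟨i, h⟩)⁻¹ * β ⟨(i : ℕ) + 1, by have := i.isLt; omega⟩ else 0) := by
    split_ifs with h
    · simp
    · simp
  have s3 : (∑ j : Fin p, (if h : 0 < (i : ℕ) ∧ (i : ℕ) - 1 < p - 1 then
        (if j = (⟨(i : ℕ) - 1, by have := i.isLt; omega⟩ : Fin p) then -(w ⟨(i : ℕ) - 1, h.2⟩)⁻¹ * β j else 0)
       else 0))
      = (if h : 0 < (i : ℕ) ∧ (i : ℕ) - 1 < p - 1 then
          -(w ⟨(i : ℕ) - 1, h.2⟩)⁻¹ * β ⟨(i : ℕ) - 1, by have := i.isLt; omega⟩ else 0) := by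
    split_ifs with h
    · simp
    · simp
  rw [s2, s3]
  split_ifs with h1 h2 h2 <;> ring

lemma fusedPrec_quadform (p : ℕ) (hp : 2 ≤ p) (τ : Fin p → ℝ) (w : Fin (p - 1) → ℝ)
    (β : Fin p → ℝ) :
    β ⬝ᵥ (fusedPrec p τ w *ᵥ β)
      = ∑ i, β i ^ 2 * (τ i)⁻¹
        + ∑ k : Fin (p - 1),
            (β ⟨(k : ℕ) + 1, by have := k.isLt; omega⟩ - β ⟨(k : ℕ), by have := k.isLt; omega⟩) ^ 2
              * (w k)⁻¹ := by
  have hrng : Finset.range p = Finset.range ((p-1)+1) := by congr 1; omega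
  set F1 : ℕ → ℝ := fun m => if h : m < p - 1 then
      (w ⟨m, by omega⟩)⁻¹ * (β ⟨m, by omega⟩ * (β ⟨m, by omega⟩ - β ⟨m + 1, by omega⟩)) else 0 with hF1
  set F2 : ℕ → ℝ := fun m => if h : 0 < m ∧ m - 1 < p - 1 then
      (w ⟨m - 1, by omega⟩)⁻¹ * (β ⟨m, by omega⟩ * (β ⟨m, by omega⟩ - β ⟨m - 1, by omega⟩)) else 0 with hF2
  have hF1v : ∀ m (h : m < p - 1), F1 m
      = (w ⟨m, h⟩)⁻¹ * (β ⟨m, by omega⟩ * (β ⟨m, by omega⟩ - β ⟨m + 1, by omega⟩)) :=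
    fun m h => dif_pos h
  have hF1z : ∀ m, ¬ (m < p - 1) → F1 m = 0 := fun m h => dif_neg h
  have hF2v : ∀ m (h : 0 < m ∧ m - 1 < p - 1), F2 m
      = (w ⟨m - 1, h.2⟩)⁻¹ * (β ⟨m, by omega⟩ * (β ⟨m, by omega⟩ - β ⟨m - 1, by omega⟩)) :=
    fun m h => dif_pos h
  have hF2z : ∀ m, ¬ (0 < m ∧ m - 1 < p - 1) → F2 m = 0 := fun m h => dif_neg h
  have expand : β ⬝ᵥ (fusedPrec p τ w *ᵥ β)
      = ∑ i : Fin p, (β i * ((τ i)⁻¹ * β i) + F1 (i : ℕ) + F2 (i : ℕ)) := by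
    unfold dotProduct
    refine Finset.sum_congr rfl fun i _ => ?_
    rw [fusedPrec_row]
    by_cases h1 : (i : ℕ) < p - 1
    · rw [dif_pos h1, hF1v _ h1]
      by_cases h2 : 0 < (i : ℕ) ∧ (i : ℕ) - 1 < p - 1
      · rw [dif_pos h2, hF2v _ h2]; (try simp only [Fin.eta]); ring
      · rw [dif_neg h2, hF2z _ h2]; (try simp only [Fin.eta]); ring
    · rw [dif_neg h1, hF1z _ h1]
      by_cases h2 : 0 < (i : ℕ) ∧ (i : ℕ) - 1 < p - 1
      · rw [dif_pos h2, hF2v _ h2]; (try simp only [Fin.eta]); ring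
      · rw [dif_neg h2, hF2z _ h2]; (try simp only [Fin.eta]); ring
  rw [expand]
  rw [Finset.sum_add_distrib, Finset.sum_add_distrib]
  have e1 : ∑ i : Fin p, β i * ((τ i)⁻¹ * β i) = ∑ i, β i ^ 2 * (τ i)⁻¹ :=
    Finset.sum_congr rfl fun i _ => by ring
  have eF1 : ∑ i : Fin p, F1 (i : ℕ) = ∑ m ∈ Finset.range (p-1), F1 m := by
    rw [Fin.sum_univ_eq_sum_range, hrng, Finset.sum_range_succ]
    have h0 : F1 (p-1) = 0 := hF1z _ (by omega)
    rw [h0, add_zero]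
  have eF2 : ∑ i : Fin p, F2 (i : ℕ) = ∑ m ∈ Finset.range (p-1), F2 (m+1) := by
    rw [Fin.sum_univ_eq_sum_range, hrng, Finset.sum_range_succ']
    have h0 : F2 0 = 0 := hF2z _ (by omega)
    rw [h0, add_zero]
  rw [e1, eF1, eF2, add_assoc]
  congr 1
  rw [← Finset.sum_add_distrib]
  have eT : (∑ k : Fin (p - 1),
        (β ⟨(k : ℕ) + 1, by have := k.isLt; omega⟩ - β ⟨(k : ℕ), by have := k.isLt; omega⟩) ^ 2
          * (w k)⁻¹)
      = ∑ m ∈ Finset.range (p-1), (fun m => if h : m < p - 1 then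
          (β ⟨m + 1, by omega⟩ - β ⟨m, by omega⟩) ^ 2 * (w ⟨m, h⟩)⁻¹ else 0) m := by
    rw [← Fin.sum_univ_eq_sum_range]
    refine Finset.sum_congr rfl fun k _ => ?_
    rw [dif_pos k.isLt]
  rw [eT]
  refine Finset.sum_congr rfl fun m hm => ?_
  have hm' : m < p - 1 := Finset.mem_range.mp hm
  rw [hF1v _ hm', hF2v _ (by omega : 0 < m+1 ∧ m+1-1 < p-1)]
  beta_reduce
  rw [dif_pos hm']
  simp only [Nat.add_sub_cancel]
  ring

lemma gDens_nonneg (lam a σ x : ℝ) (hlam : 0 ≤ lam) (hx : 0 ≤ x) : 0 ≤ gDens lam a σ x := by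
  unfold gDens; positivity

lemma gDens_ge (lam b σ x a : ℝ) (hlam : 0 < lam) (hσ : 0 < σ) (hx : 0 < x)
    (hb : 0 ≤ b) (hab : |a| ≤ b) :
    Real.exp (-(lam * b) / σ) * gDens lam b σ x ≤ gDens lam a σ x := by
  unfold gDens
  rw [abs_of_nonneg hb]
  have hC : (0:ℝ) ≤ lam / Real.sqrt (2 * Real.pi) * x ^ (-(1:ℝ) / 2) := by positivity
  calc Real.exp (-(lam * b) / σ) *
        (lam / Real.sqrt (2 * Real.pi) * Real.exp (lam * b / σ) * x ^ (-(1:ℝ) / 2) *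
          Real.exp (-(lam ^ 2 * x) / 2 - b ^ 2 / (2 * σ ^ 2 * x)))
      = (lam / Real.sqrt (2 * Real.pi) * x ^ (-(1:ℝ) / 2)) *
          Real.exp (-(lam * b) / σ + lam * b / σ + (-(lam ^ 2 * x) / 2 - b ^ 2 / (2 * σ ^ 2 * x))) := by
        rw [Real.exp_add, Real.exp_add]; ring
    _ ≤ (lam / Real.sqrt (2 * Real.pi) * x ^ (-(1:ℝ) / 2)) *
          Real.exp (lam * |a| / σ + (-(lam ^ 2 * x) / 2 - a ^ 2 / (2 * σ ^ 2 * x))) := by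
        apply mul_le_mul_of_nonneg_left _ hC
        apply Real.exp_le_exp.mpr
        have h1 : (0:ℝ) ≤ lam * |a| / σ := by positivity
        have h2 : a ^ 2 ≤ b ^ 2 := by nlinarith [sq_abs a, abs_nonneg a]
        have h3 : a ^ 2 / (2 * σ ^ 2 * x) ≤ b ^ 2 / (2 * σ ^ 2 * x) := by gcongr
        have h0 : -(lam * b) / σ + lam * b / σ = 0 := by ring
        linarith
    _ = lam / Real.sqrt (2 * Real.pi) * Real.exp (lam * |a| / σ) * x ^ (-(1:ℝ) / 2) *
          Real.exp (-(lam ^ 2 * x) / 2 - a ^ 2 / (2 * σ ^ 2 * x)) := by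
        rw [Real.exp_add]; ring

lemma igam_ge (a L B R s : ℝ) (ha : 0 < a) (hL : 0 ≤ L) (hLB : L ≤ B) (hBR : B ≤ R)
    (hR : 0 < R) (hs : 0 < s) :
    (L / R) ^ a * Real.exp ((R - B) / (2 * s)) * igamDens a (R / 2) s ≤ igamDens a (B / 2) s := by
  unfold igamDens
  have hΓ : 0 < Real.Gamma a := Real.Gamma_pos_of_pos ha
  have hsp : (0:ℝ) < s ^ (-a - 1 : ℝ) := Real.rpow_pos_of_pos hs _
  have h1 : (L / R) ^ a * (R / 2) ^ a = (L / 2 : ℝ) ^ a := by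
    rw [← Real.mul_rpow (by positivity) (by positivity)]
    congr 1; field_simp
  have h3 : Real.exp ((R - B) / (2 * s)) * Real.exp (-(R / 2) / s) = Real.exp (-(B / 2) / s) := by
    rw [← Real.exp_add]; congr 1; field_simp; ring
  calc (L / R) ^ a * Real.exp ((R - B) / (2 * s)) *
        ((R / 2) ^ a / Real.Gamma a * s ^ (-a - 1 : ℝ) * Real.exp (-(R / 2) / s))
      = ((L / R) ^ a * (R / 2) ^ a) / Real.Gamma a * s ^ (-a - 1 : ℝ) *
          (Real.exp ((R - B) / (2 * s)) * Real.exp (-(R / 2) / s)) := by ring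
    _ = (L / 2 : ℝ) ^ a / Real.Gamma a * s ^ (-a - 1 : ℝ) * Real.exp (-(B / 2) / s) := by
        rw [h1, h3]
    _ ≤ (B / 2) ^ a / Real.Gamma a * s ^ (-a - 1 : ℝ) * Real.exp (-(B / 2) / s) := by
        have h2 : (L / 2 : ℝ) ^ a ≤ (B / 2) ^ a :=
          Real.rpow_le_rpow (by positivity) (by linarith) ha.le
        have he : (0:ℝ) < Real.exp (-(B / 2) / s) := Real.exp_pos _
        gcongr

lemma quad_key (n p : ℕ) (y : Fin n → ℝ) (X : Matrix (Fin n) (Fin p) ℝ) (c : ℝ) (hc : 0 < c) :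
    ∀ β : Fin p → ℝ,
      y ⬝ᵥ y - y ⬝ᵥ (X *ᵥ ((Xᵀ * X + c • (1 : Matrix (Fin p) (Fin p) ℝ))⁻¹ *ᵥ (Xᵀ *ᵥ y)))
        ≤ (y - X *ᵥ β) ⬝ᵥ (y - X *ᵥ β) + c * (β ⬝ᵥ β) ∧
      0 ≤ y ⬝ᵥ y - y ⬝ᵥ (X *ᵥ ((Xᵀ * X + c • (1 : Matrix (Fin p) (Fin p) ℝ))⁻¹ *ᵥ (Xᵀ *ᵥ y))) := by
  set M : Matrix (Fin p) (Fin p) ℝ := Xᵀ * X + c • 1 with hM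
  set μ : Fin p → ℝ := M⁻¹ *ᵥ (Xᵀ *ᵥ y) with hμ
  have hMsym : Mᵀ = M := by
    rw [hM, Matrix.transpose_add, Matrix.transpose_mul, Matrix.transpose_transpose,
      Matrix.transpose_smul, Matrix.transpose_one]
  have quadM : ∀ v : Fin p → ℝ, v ⬝ᵥ (M *ᵥ v) = (X *ᵥ v) ⬝ᵥ (X *ᵥ v) + c * (v ⬝ᵥ v) := by
    intro v
    rw [hM, Matrix.add_mulVec, dotProduct_add, Matrix.smul_mulVec,
      Matrix.one_mulVec, dotProduct_smul, ← Matrix.mulVec_mulVec,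
      Matrix.dotProduct_mulVec v Xᵀ, Matrix.vecMul_transpose]
    rfl
  have hdet : M.det ≠ 0 := by
    intro h
    obtain ⟨v, hv0, hMv⟩ := (Matrix.exists_mulVec_eq_zero_iff).mpr h
    have h1 : v ⬝ᵥ (M *ᵥ v) = 0 := by rw [hMv, dotProduct_zero]
    rw [quadM v] at h1
    have h2 : 0 < v ⬝ᵥ v :=
      lt_of_le_of_ne (dot_self_nonneg' v) fun h => hv0 (dotProduct_self_eq_zero.mp h.symm)
    nlinarith [dot_self_nonneg' (X *ᵥ v)]
  have hMμ : M *ᵥ μ = Xᵀ *ᵥ y := by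
    rw [hμ, Matrix.mulVec_mulVec, Matrix.mul_nonsing_inv M (isUnit_iff_ne_zero.mpr hdet),
      Matrix.one_mulVec]
  have hsymdot : ∀ u v : Fin p → ℝ, u ⬝ᵥ (M *ᵥ v) = v ⬝ᵥ (M *ᵥ u) := by
    intro u v
    rw [Matrix.dotProduct_mulVec u M v, ← Matrix.mulVec_transpose, hMsym, dotProduct_comm]
  have hdotμ : ∀ v : Fin p → ℝ, v ⬝ᵥ (M *ᵥ μ) = y ⬝ᵥ (X *ᵥ v) := by
    intro v
    rw [hMμ, Matrix.dotProduct_mulVec v Xᵀ, Matrix.vecMul_transpose, dotProduct_comm]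
  have key : ∀ v : Fin p → ℝ, (y - X *ᵥ v) ⬝ᵥ (y - X *ᵥ v) + c * (v ⬝ᵥ v)
      = (v - μ) ⬝ᵥ (M *ᵥ (v - μ)) + (y ⬝ᵥ y - y ⬝ᵥ (X *ᵥ μ)) := by
    intro v
    have h1 : (v - μ) ⬝ᵥ (M *ᵥ (v - μ))
        = v ⬝ᵥ (M *ᵥ v) - v ⬝ᵥ (M *ᵥ μ) - μ ⬝ᵥ (M *ᵥ v) + μ ⬝ᵥ (M *ᵥ μ) := by
      rw [Matrix.mulVec_sub, dotProduct_sub, sub_dotProduct, sub_dotProduct]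
      ring
    have h6 : (y - X *ᵥ v) ⬝ᵥ (y - X *ᵥ v)
        = y ⬝ᵥ y - 2 * (y ⬝ᵥ (X *ᵥ v)) + (X *ᵥ v) ⬝ᵥ (X *ᵥ v) := by
      rw [dotProduct_sub, sub_dotProduct, sub_dotProduct,
        dotProduct_comm (X *ᵥ v) y]
      ring
    rw [h1, hsymdot μ v, hdotμ v, hdotμ μ, quadM v, h6]
    ring
  intro β
  have hposβ : 0 ≤ (β - μ) ⬝ᵥ (M *ᵥ (β - μ)) := by
    rw [quadM (β - μ)]
    have := dot_self_nonneg' (X *ᵥ (β - μ)); have := dot_self_nonneg' (β - μ)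
    nlinarith
  have hkeyβ := key β
  have hkeyμ := key μ
  have hzero : (μ - μ) ⬝ᵥ (M *ᵥ (μ - μ)) = 0 := by
    simp
  constructor
  · nlinarith
  · rw [hzero, zero_add] at hkeyμ
    have := dot_self_nonneg' (y - X *ᵥ μ); have := dot_self_nonneg' μ
    nlinarith

lemma tau_bound {t S dd ll : ℝ} (hll : 0 < ll) (hle : t ≤ S) (hsum : ll ^ 2 / 4 * S ≤ dd) :
    t ≤ 4 * dd / ll ^ 2 := by
  rw [le_div_iff₀ (by positivity)]
  nlinarith [mul_le_mul_of_nonneg_left hle (by positivity : (0:ℝ) ≤ ll ^ 2 / 4)]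

lemma abs_le_of_bounds {x T dd ll : ℝ} (hll : 0 < ll) (hT : 0 < T) (hdd : 0 < dd)
    (hq : x ^ 2 * T⁻¹ ≤ dd) (hTb : T ≤ 4 * dd / ll ^ 2) : |x| ≤ 2 * dd / ll := by
  have hsq : x ^ 2 ≤ dd * T := by
    have h := mul_le_mul_of_nonneg_right hq hT.le
    rwa [mul_assoc, inv_mul_cancel₀ hT.ne', mul_one] at h
  have h2 : x ^ 2 ≤ (2 * dd / ll) ^ 2 := by
    calc x ^ 2 ≤ dd * T := hsq
      _ ≤ dd * (4 * dd / ll ^ 2) := by nlinarith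
      _ = (2 * dd / ll) ^ 2 := by field_simp; ring
  have hD : 0 < 2 * dd / ll := by positivity
  nlinarith [abs_nonneg x, sq_abs x]

lemma c_le_inv {T dd ll : ℝ} (hll : 0 < ll) (hdd : 0 < dd) (hT : 0 < T)
    (hTb : T ≤ 4 * dd / ll ^ 2) : ll ^ 2 / (8 * dd) ≤ T⁻¹ := by
  have h8 : T ≤ 8 * dd / ll ^ 2 := by
    calc T ≤ 4 * dd / ll ^ 2 := hTb
      _ ≤ 8 * dd / ll ^ 2 := by gcongr; linarith
  have h9 : (8 * dd / ll ^ 2)⁻¹ ≤ T⁻¹ := by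
    apply inv_anti₀ hT h8
  calc ll ^ 2 / (8 * dd) = (8 * dd / ll ^ 2)⁻¹ := by field_simp
    _ ≤ T⁻¹ := h9

lemma pt_bound {x T cc : ℝ} (h : cc ≤ T⁻¹) : cc * (x * x) ≤ x ^ 2 * T⁻¹ := by
  nlinarith [sq_nonneg x]

end Aux

set_option maxHeartbeats 1000000

/-- minorization condition for the Bayesian fused lasso Gibbs sampler.
With `d₁ = 2d/λ₁`, `d₂ = 2d/λ₂`, `R = d + 2ξ + p²λ₂²d₂² + p²λ₁²d₁²` and
`ε = e^{−1}((yᵀy − yᵀX(XᵀX + (λ₁²/(8d))I_p)⁻¹Xᵀy + 2ξ)/R)^{(n+p)/2+α}`, for every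
starting point in the small set `{V_BFL ≤ d}` and every state `(β, τ², w², σ²)`,
`k(β,τ²,w²,σ²) ≥ ε φ_p(β; A_{τ,w}⁻¹Xᵀy, σ²A_{τ,w}⁻¹) h_{(n+p)/2+α,R/2}(σ²)
∏ᵢ g_{λ₁,d₁,σ}(τ²ᵢ) ∏ᵢ g_{λ₂,d₂,σ}(w²ᵢ)`. -/
theorem fusedLasso_minorization_condition (n p : ℕ) (hn : 1 ≤ n) (hp : 2 ≤ p)
    (y : Fin n → ℝ) (X : Matrix (Fin n) (Fin p) ℝ) (l1 l2 α ξ d : ℝ)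
    (h1 : 0 < l1) (h2 : 0 < l2) (hα : 0 ≤ α) (hξ : 0 ≤ ξ) (hd : 0 < d)
    (β₀ τ₀ : Fin p → ℝ) (w₀ : Fin (p - 1) → ℝ) (s₀ : ℝ)
    (hτ₀ : ∀ i, 0 < τ₀ i) (hw₀ : ∀ i, 0 < w₀ i) (hs₀ : 0 < s₀)
    (hsmall : VBFL n p y X l1 l2 β₀ τ₀ w₀ ≤ d)
    (β τ : Fin p → ℝ) (w : Fin (p - 1) → ℝ) (s : ℝ)
    (hτ : ∀ i, 0 < τ i) (hw : ∀ i, 0 < w i) (hs : 0 < s) :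
    Real.exp (-1)
        * ((y ⬝ᵥ y
              - y ⬝ᵥ (X *ᵥ ((Xᵀ * X + (l1 ^ 2 / (8 * d)) • (1 : Matrix (Fin p) (Fin p) ℝ))⁻¹
                  *ᵥ (Xᵀ *ᵥ y)))
              + 2 * ξ)
            / (d + 2 * ξ + p ^ 2 * l2 ^ 2 * (2 * d / l2) ^ 2
                + p ^ 2 * l1 ^ 2 * (2 * d / l1) ^ 2)) ^ (((n : ℝ) + p) / 2 + α)
        * (gaussDens p (Xᵀ * X + fusedPrec p τ w)
              ((Xᵀ * X + fusedPrec p τ w)⁻¹ *ᵥ (Xᵀ *ᵥ y)) s β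
            * igamDens (((n : ℝ) + p) / 2 + α)
                ((d + 2 * ξ + p ^ 2 * l2 ^ 2 * (2 * d / l2) ^ 2
                    + p ^ 2 * l1 ^ 2 * (2 * d / l1) ^ 2) / 2) s
            * (∏ i, gDens l1 (2 * d / l1) (Real.sqrt s) (τ i))
            * (∏ i : Fin (p - 1), gDens l2 (2 * d / l2) (Real.sqrt s) (w i)))
      ≤ kBFL n p y X l1 l2 α ξ β₀ τ₀ w₀ (β, τ, w, s) := by
  simp only [kBFL]
  have hl1 : l1 ≠ 0 := ne_of_gt h1
  have hl2 : l2 ≠ 0 := ne_of_gt h2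
  set σ : ℝ := Real.sqrt s with hσdef
  have hσ : 0 < σ := Real.sqrt_pos.mpr hs
  have hσ2 : σ ^ 2 = s := Real.sq_sqrt hs.le
  set a : ℝ := ((n : ℝ) + p) / 2 + α with hadef
  have hn' : (1 : ℝ) ≤ (n : ℝ) := by exact_mod_cast hn
  have hp' : (2 : ℝ) ≤ (p : ℝ) := by exact_mod_cast hp
  have ha : 0 < a := by rw [hadef]; linarith
  set d1 : ℝ := 2 * d / l1 with hd1def
  set d2 : ℝ := 2 * d / l2 with hd2def
  have hd1 : 0 < d1 := by rw [hd1def]; positivity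
  have hd2 : 0 < d2 := by rw [hd2def]; positivity
  set R : ℝ := d + 2 * ξ + (p:ℝ) ^ 2 * l2 ^ 2 * d2 ^ 2 + (p:ℝ) ^ 2 * l1 ^ 2 * d1 ^ 2 with hRdef
  have hR : 0 < R := by rw [hRdef]; positivity
  have hRval : R = d + 2 * ξ + 8 * (p:ℝ) ^ 2 * d ^ 2 := by
    rw [hRdef, hd1def, hd2def]; field_simp; ring
  set q1 : ℝ := (y - X *ᵥ β₀) ⬝ᵥ (y - X *ᵥ β₀) with hq1def
  have hq1 : 0 ≤ q1 := dot_self_nonneg' _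
  set B : ℝ := q1 + β₀ ⬝ᵥ (fusedPrec p τ₀ w₀ *ᵥ β₀) + 2 * ξ with hBdef
  have hQform := fusedPrec_quadform p hp τ₀ w₀ β₀
  set S1 : ℝ := ∑ i, β₀ i ^ 2 * (τ₀ i)⁻¹ with hS1def
  set S2 : ℝ := ∑ k : Fin (p - 1),
      (β₀ ⟨(k : ℕ) + 1, by have := k.isLt; omega⟩ - β₀ ⟨(k : ℕ), by have := k.isLt; omega⟩) ^ 2
        * (w₀ k)⁻¹ with hS2def
  have hS1 : 0 ≤ S1 := Finset.sum_nonneg fun i _ => by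
    have := (hτ₀ i); positivity
  have hS2 : 0 ≤ S2 := Finset.sum_nonneg fun k _ => by
    have := (hw₀ k); positivity
  have ht1 : 0 ≤ l1 ^ 2 / 4 * ∑ i, τ₀ i := by
    have : 0 ≤ ∑ i, τ₀ i := Finset.sum_nonneg fun i _ => (hτ₀ i).le
    positivity
  have ht2 : 0 ≤ l2 ^ 2 / 4 * ∑ i, w₀ i := by
    have : 0 ≤ ∑ i, w₀ i := Finset.sum_nonneg fun i _ => (hw₀ i).le
    positivity
  have hsmall' : q1 + (S1 + S2) + l1 ^ 2 / 4 * ∑ i, τ₀ i + l2 ^ 2 / 4 * ∑ i, w₀ i ≤ d := by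
    have := hsmall
    unfold VBFL at this
    rw [hQform] at this
    exact this
  have hsum1 : l1 ^ 2 / 4 * ∑ i, τ₀ i ≤ d := by linarith
  have hsum2 : l2 ^ 2 / 4 * ∑ i, w₀ i ≤ d := by linarith
  have hS1d : S1 ≤ d := by linarith
  have hS2d : S2 ≤ d := by linarith
  -- bound on each τ₀ i
  have hτbound : ∀ i, τ₀ i ≤ 4 * d / l1 ^ 2 := by
    intro i
    have hle : τ₀ i ≤ ∑ j, τ₀ j :=
      Finset.single_le_sum (fun j _ => (hτ₀ j).le) (Finset.mem_univ i)
    exact tau_bound h1 hle hsum1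
  have hwbound : ∀ k, w₀ k ≤ 4 * d / l2 ^ 2 := by
    intro k
    have hle : w₀ k ≤ ∑ j, w₀ j :=
      Finset.single_le_sum (fun j _ => (hw₀ j).le) (Finset.mem_univ k)
    exact tau_bound h2 hle hsum2
  -- |β₀ i| ≤ d1
  have hβ₀ : ∀ i, |β₀ i| ≤ d1 := by
    intro i
    have hone : β₀ i ^ 2 * (τ₀ i)⁻¹ ≤ S1 :=
      Finset.single_le_sum (f := fun j => β₀ j ^ 2 * (τ₀ j)⁻¹)
        (fun j _ => by have := hτ₀ j; positivity) (Finset.mem_univ i)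
    rw [hd1def]
    exact abs_le_of_bounds h1 (hτ₀ i) hd (le_trans hone hS1d) (hτbound i)
  -- |β₀ (k+1) - β₀ k| ≤ d2
  have hΔ : ∀ k : Fin (p - 1),
      |β₀ ⟨(k : ℕ) + 1, by have := k.isLt; omega⟩ - β₀ ⟨(k : ℕ), by have := k.isLt; omega⟩| ≤ d2 := by
    intro k
    set Δ : ℝ := β₀ ⟨(k : ℕ) + 1, by have := k.isLt; omega⟩ - β₀ ⟨(k : ℕ), by have := k.isLt; omega⟩
    have hone : Δ ^ 2 * (w₀ k)⁻¹ ≤ S2 := by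
      rw [hS2def]
      exact Finset.single_le_sum (f := fun j : Fin (p-1) =>
          (β₀ ⟨(j : ℕ) + 1, by have := j.isLt; omega⟩ - β₀ ⟨(j : ℕ), by have := j.isLt; omega⟩) ^ 2 * (w₀ j)⁻¹)
        (fun j _ => by have := hw₀ j; positivity) (Finset.mem_univ k)
    rw [hd2def]
    exact abs_le_of_bounds h2 (hw₀ k) hd (le_trans hone hS2d) (hwbound k)
  -- lower bound L
  set c : ℝ := l1 ^ 2 / (8 * d) with hcdef
  have hc : 0 < c := by rw [hcdef]; positivity
  set L : ℝ := y ⬝ᵥ y - y ⬝ᵥ (X *ᵥ ((Xᵀ * X + c • (1 : Matrix (Fin p) (Fin p) ℝ))⁻¹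
      *ᵥ (Xᵀ *ᵥ y))) + 2 * ξ with hLdef
  have hquad := quad_key n p y X c hc
  have hL : 0 ≤ L := by
    have := (hquad 0).2
    rw [hLdef]; linarith
  have hcβ : c * (β₀ ⬝ᵥ β₀) ≤ S1 := by
    have hpt : ∀ i : Fin p, c * (β₀ i * β₀ i) ≤ β₀ i ^ 2 * (τ₀ i)⁻¹ := by
      intro i
      have hinv : c ≤ (τ₀ i)⁻¹ := by
        rw [hcdef]; exact c_le_inv h1 hd (hτ₀ i) (hτbound i)
      exact pt_bound hinv
    calc c * (β₀ ⬝ᵥ β₀) = ∑ i, c * (β₀ i * β₀ i) := by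
          rw [dotProduct, Finset.mul_sum]
      _ ≤ ∑ i, β₀ i ^ 2 * (τ₀ i)⁻¹ := Finset.sum_le_sum fun i _ => hpt i
  have hLB : L ≤ B := by
    have := (hquad β₀).1
    rw [hLdef, hBdef]
    linarith
  have hBR : B ≤ R := by
    rw [hRval, hBdef]
    have : q1 + (S1 + S2) ≤ d := by linarith
    have hp2d : 0 ≤ 8 * (p:ℝ) ^ 2 * d ^ 2 := by positivity
    linarith [hQform]
  -- factorwise bounds
  have hl1d1 : l1 * d1 = 2 * d := by rw [hd1def]; field_simp
  have hl2d2 : l2 * d2 = 2 * d := by rw [hd2def]; field_simp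
  have hP1 : Real.exp (-(l1 * d1) / σ) ^ p * ∏ i, gDens l1 d1 σ (τ i)
      ≤ ∏ i, gDens l1 (β₀ i) σ (τ i) := by
    calc Real.exp (-(l1 * d1) / σ) ^ p * ∏ i, gDens l1 d1 σ (τ i)
        = ∏ i : Fin p, Real.exp (-(l1 * d1) / σ) * gDens l1 d1 σ (τ i) := by
          rw [Finset.prod_mul_distrib, Finset.prod_const, Finset.card_univ, Fintype.card_fin]
      _ ≤ ∏ i, gDens l1 (β₀ i) σ (τ i) := by
          apply Finset.prod_le_prod
          · intro i _
            exact mul_nonneg (Real.exp_pos _).le (gDens_nonneg _ _ _ _ h1.le (hτ i).le)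
          · intro i _
            exact gDens_ge l1 d1 σ (τ i) (β₀ i) h1 hσ (hτ i) hd1.le (hβ₀ i)
  have hP2 : Real.exp (-(l2 * d2) / σ) ^ (p - 1) * ∏ i : Fin (p-1), gDens l2 d2 σ (w i)
      ≤ ∏ i : Fin (p-1), gDens l2 (β₀ ⟨(i : ℕ) + 1, by have := i.isLt; omega⟩
          - β₀ ⟨(i : ℕ), by have := i.isLt; omega⟩) σ (w i) := by
    calc Real.exp (-(l2 * d2) / σ) ^ (p - 1) * ∏ i : Fin (p-1), gDens l2 d2 σ (w i)
        = ∏ i : Fin (p-1), Real.exp (-(l2 * d2) / σ) * gDens l2 d2 σ (w i) := by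
          rw [Finset.prod_mul_distrib, Finset.prod_const, Finset.card_univ, Fintype.card_fin]
      _ ≤ _ := by
          apply Finset.prod_le_prod
          · intro i _
            exact mul_nonneg (Real.exp_pos _).le (gDens_nonneg _ _ _ _ h2.le (hw i).le)
          · intro i _
            exact gDens_ge l2 d2 σ (w i) _ h2 hσ (hw i) hd2.le (hΔ i)
  have hH : (L / R) ^ a * Real.exp ((R - B) / (2 * s)) * igamDens a (R / 2) s
      ≤ igamDens a (B / 2) s := igam_ge a L B R s ha hL hLB hBR hR hs
  -- exponent bound
  have hPm1 : ((p - 1 : ℕ) : ℝ) = (p : ℝ) - 1 := by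
    have h1p : 1 ≤ p := by omega
    rw [Nat.cast_sub h1p]; norm_num
  have hexp : Real.exp (-1)
      ≤ Real.exp ((p : ℝ) * (-(l1 * d1) / σ) + ((p : ℝ) - 1) * (-(l2 * d2) / σ)
          + (R - B) / (2 * s)) := by
    apply Real.exp_le_exp.mpr
    rw [hl1d1, hl2d2]
    have h8 : 8 * (p:ℝ) ^ 2 * d ^ 2 ≤ R - B := by
      rw [hRval]
      have : B ≤ d + 2 * ξ := by
        rw [hBdef]; have : q1 + (S1 + S2) ≤ d := by linarith
        linarith [hQform]
      linarith
    have hdiv : 4 * (p:ℝ) ^ 2 * d ^ 2 / σ ^ 2 ≤ (R - B) / (2 * s) := by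
      rw [hσ2]
      calc 4 * (p:ℝ) ^ 2 * d ^ 2 / s = 8 * (p:ℝ) ^ 2 * d ^ 2 / (2 * s) := by
            rw [div_eq_div_iff (by positivity) (by positivity)]; ring
        _ ≤ (R - B) / (2 * s) := by gcongr
    have hkey : -1 ≤ (p : ℝ) * (-(2 * d) / σ) + ((p : ℝ) - 1) * (-(2 * d) / σ)
        + 4 * (p:ℝ) ^ 2 * d ^ 2 / σ ^ 2 := by
      have expand : (p : ℝ) * (-(2 * d) / σ) + ((p : ℝ) - 1) * (-(2 * d) / σ)
          + 4 * (p:ℝ) ^ 2 * d ^ 2 / σ ^ 2 + 1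
          = ((2 * (p:ℝ) * d - σ) ^ 2 + 2 * d * σ) / σ ^ 2 := by
        field_simp
        ring
      have hpos : 0 ≤ ((2 * (p:ℝ) * d - σ) ^ 2 + 2 * d * σ) / σ ^ 2 := by positivity
      linarith
    linarith
  -- assemble
  set G : ℝ := gaussDens p (Xᵀ * X + fusedPrec p τ w)
      ((Xᵀ * X + fusedPrec p τ w)⁻¹ *ᵥ (Xᵀ *ᵥ y)) s β with hGdef
  have hG : 0 ≤ G := by
    rw [hGdef]; unfold gaussDens
    apply mul_nonneg (mul_nonneg ?_ (Real.sqrt_nonneg _)) (Real.exp_pos _).le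
    exact Real.rpow_nonneg (by positivity) _
  have hQ1 : 0 ≤ ∏ i, gDens l1 d1 σ (τ i) :=
    Finset.prod_nonneg fun i _ => gDens_nonneg _ _ _ _ h1.le (hτ i).le
  have hQ2 : 0 ≤ ∏ i : Fin (p-1), gDens l2 d2 σ (w i) :=
    Finset.prod_nonneg fun i _ => gDens_nonneg _ _ _ _ h2.le (hw i).le
  have hHR : 0 ≤ igamDens a (R / 2) s := by
    unfold igamDens
    have hΓ : 0 < Real.Gamma a := Real.Gamma_pos_of_pos ha
    positivity
  have hLR : 0 ≤ (L / R) ^ a := Real.rpow_nonneg (by positivity) a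
  calc Real.exp (-1) * (L / R) ^ a * (G * igamDens a (R / 2) s
          * (∏ i, gDens l1 d1 σ (τ i)) * (∏ i : Fin (p-1), gDens l2 d2 σ (w i)))
      ≤ Real.exp ((p : ℝ) * (-(l1 * d1) / σ) + ((p : ℝ) - 1) * (-(l2 * d2) / σ)
            + (R - B) / (2 * s)) * (L / R) ^ a
          * (G * igamDens a (R / 2) s * (∏ i, gDens l1 d1 σ (τ i))
            * (∏ i : Fin (p-1), gDens l2 d2 σ (w i))) := by
        have hrest : 0 ≤ (L / R) ^ a * (G * igamDens a (R / 2) s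
            * (∏ i, gDens l1 d1 σ (τ i)) * (∏ i : Fin (p-1), gDens l2 d2 σ (w i))) := by
          apply mul_nonneg hLR
          apply mul_nonneg (mul_nonneg (mul_nonneg hG hHR) hQ1) hQ2
        calc Real.exp (-1) * (L / R) ^ a * (G * igamDens a (R / 2) s
                * (∏ i, gDens l1 d1 σ (τ i)) * (∏ i : Fin (p-1), gDens l2 d2 σ (w i)))
            = Real.exp (-1) * ((L / R) ^ a * (G * igamDens a (R / 2) s
                * (∏ i, gDens l1 d1 σ (τ i)) * (∏ i : Fin (p-1), gDens l2 d2 σ (w i)))) := by ring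
          _ ≤ Real.exp ((p : ℝ) * (-(l1 * d1) / σ) + ((p : ℝ) - 1) * (-(l2 * d2) / σ)
                + (R - B) / (2 * s)) * ((L / R) ^ a * (G * igamDens a (R / 2) s
                * (∏ i, gDens l1 d1 σ (τ i)) * (∏ i : Fin (p-1), gDens l2 d2 σ (w i)))) :=
              mul_le_mul_of_nonneg_right hexp hrest
          _ = _ := by ring
    _ = G * (Real.exp (-(l1 * d1) / σ) ^ p * ∏ i, gDens l1 d1 σ (τ i))
          * (Real.exp (-(l2 * d2) / σ) ^ (p - 1) * ∏ i : Fin (p-1), gDens l2 d2 σ (w i))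
          * ((L / R) ^ a * Real.exp ((R - B) / (2 * s)) * igamDens a (R / 2) s) := by
        rw [Real.exp_add, Real.exp_add]
        rw [show ((p : ℝ) * (-(l1 * d1) / σ)) = ((p : ℕ) : ℝ) * (-(l1 * d1) / σ) from rfl]
        rw [← hPm1]
        rw [Real.exp_nat_mul, Real.exp_nat_mul]
        ring
    _ ≤ G * (∏ i, gDens l1 (β₀ i) σ (τ i))
          * (∏ i : Fin (p-1), gDens l2 (β₀ ⟨(i : ℕ) + 1, by have := i.isLt; omega⟩
              - β₀ ⟨(i : ℕ), by have := i.isLt; omega⟩) σ (w i))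
          * igamDens a (B / 2) s := by
        have hx1 : 0 ≤ Real.exp (-(l1 * d1) / σ) ^ p * ∏ i, gDens l1 d1 σ (τ i) := by
          apply mul_nonneg (pow_nonneg (Real.exp_pos _).le _) hQ1
        have hx2 : 0 ≤ Real.exp (-(l2 * d2) / σ) ^ (p-1) * ∏ i : Fin (p-1), gDens l2 d2 σ (w i) := by
          apply mul_nonneg (pow_nonneg (Real.exp_pos _).le _) hQ2
        have hx3 : 0 ≤ (L / R) ^ a * Real.exp ((R - B) / (2 * s)) * igamDens a (R / 2) s := by
          apply mul_nonneg (mul_nonneg hLR (Real.exp_pos _).le) hHR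
        have hy1 : 0 ≤ ∏ i, gDens l1 (β₀ i) σ (τ i) :=
          Finset.prod_nonneg fun i _ => gDens_nonneg _ _ _ _ h1.le (hτ i).le
        have hy2 : 0 ≤ ∏ i : Fin (p-1), gDens l2 (β₀ ⟨(i : ℕ) + 1, by have := i.isLt; omega⟩
            - β₀ ⟨(i : ℕ), by have := i.isLt; omega⟩) σ (w i) :=
          Finset.prod_nonneg fun i _ => gDens_nonneg _ _ _ _ h2.le (hw i).le
        apply mul_le_mul
        · apply mul_le_mul
          · exact mul_le_mul_of_nonneg_left hP1 hG
          · exact hP2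
          · exact hx2
          · exact mul_nonneg hG hy1
        · exact hH
        · exact hx3
        · exact mul_nonneg (mul_nonneg hG hy1) hy2
    _ = _ := by rw [hBdef]
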